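/- If 𝓑 ⊆ 2^V \ {V} is a Sperner family of nonempty sets with |𝓑| = m, then OPT_B(𝓑) = m and OPT_BA(𝓑) = Σ_{B∈𝓑} |B|. -/

import Mathlib

open Finset

variable {V : Type*} [Fintype V] [DecidableEq V]

/-- A pure Horn CNF is a finite set of clauses `(B, v)`: body `B`, head `v`,
with `B` nonempty and `v ∉ B`. -/
def PureHorn (Φ : Finset (Finset V × V)) : Prop :=
  ∀ c ∈ Φ, c.1.Nonempty ∧ c.2 ∉ c.1

/-- A set `W` is closed under the clauses of `Φ`. -/
def HornClosed (Φ : Finset (Finset V × V)) (W : Set V) : Prop :=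
  ∀ c ∈ Φ, ↑c.1 ⊆ W → c.2 ∈ W

/-- Forward-chaining closure `F_Φ(Z)`: the smallest set containing `Z`
that is closed under the clauses of `Φ`. -/
def hornClosure (Φ : Finset (Finset V × V)) (Z : Set V) : Set V :=
  ⋂₀ {W : Set V | Z ⊆ W ∧ HornClosed Φ W}

/-- `Ψ_𝓑 = ⋀_{B ∈ 𝓑} B → (V \ B)`. -/
def keyCNF (𝓑 : Finset (Finset V)) : Finset (Finset V × V) :=
  𝓑.biUnion fun B => (Finset.univ \ B).image fun v => (B, v)

/-- `Φ` represents the key Horn function `h_𝓑`, i.e. `Φ` is a pure Horn CNF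
equivalent to `Ψ_𝓑`. -/
def Represents (𝓑 : Finset (Finset V)) (Φ : Finset (Finset V × V)) : Prop :=
  PureHorn Φ ∧ ∀ Z : Finset V, hornClosure Φ ↑Z = hornClosure (keyCNF 𝓑) ↑Z

/-- (B) number of (distinct) bodies. -/
def sizeB (Φ : Finset (Finset V × V)) : ℕ := (Φ.image Prod.fst).card
/-- (BA) body area `Σ_i |B_i|` over the distinct bodies. -/
def sizeBA (Φ : Finset (Finset V × V)) : ℕ := ∑ B ∈ Φ.image Prod.fst, B.card
/-- (C) number of clauses `Σ_i |H_i|`. -/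
def sizeC (Φ : Finset (Finset V × V)) : ℕ := Φ.card
/-- (TA) total area `Σ_i (|B_i| + |H_i|)`. -/
def sizeTA (Φ : Finset (Finset V × V)) : ℕ := sizeBA Φ + sizeC Φ
/-- (BC) bodies plus clauses `Σ_i (|H_i| + 1)`. -/
def sizeBC (Φ : Finset (Finset V × V)) : ℕ := sizeB Φ + sizeC Φ
/-- (L) number of literals `Σ_i (|B_i| + 1)·|H_i|`. -/
def sizeL (Φ : Finset (Finset V × V)) : ℕ := ∑ c ∈ Φ, (c.1.card + 1)

/-- `μ` is one of the six size measures. -/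
def IsMeasure (μ : Finset (Finset V × V) → ℕ) : Prop :=
  μ = sizeB ∨ μ = sizeBA ∨ μ = sizeTA ∨ μ = sizeC ∨ μ = sizeBC ∨ μ = sizeL

/-- `OPT_μ(𝓑)`: minimum `μ`-size of a CNF representing `h_𝓑`. -/
noncomputable def OPT (μ : Finset (Finset V × V) → ℕ) (𝓑 : Finset (Finset V)) : ℕ :=
  sInf {s : ℕ | ∃ Φ : Finset (Finset V × V), Represents 𝓑 Φ ∧ μ Φ = s}

/-- `price_μ(S,T)`: minimum `μ`-size of a pure Horn CNF with bodies in `𝓑`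
whose forward chaining from `S` reaches all of `T`. -/
noncomputable def price (μ : Finset (Finset V × V) → ℕ) (𝓑 : Finset (Finset V))
    (S T : Finset V) : ℕ :=
  sInf {s : ℕ | ∃ Φ : Finset (Finset V × V),
    PureHorn Φ ∧ (∀ c ∈ Φ, c.1 ∈ 𝓑) ∧ ↑T ⊆ hornClosure Φ ↑S ∧ μ Φ = s}

/-!
Every representation `Φ` of `h_𝓑` must contain each `B ∈ 𝓑` as a body. Indeed `F_Φ(B) = V ≠ B`,
so some clause `C → v` of `Φ` has `C ⊆ B` and `v ∉ B`. Then `v ∈ F_Φ(C) = F_Ψ(C)` with `v ∉ C`,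
so `C` is not closed under `Ψ_𝓑`, i.e. `C` contains some `B' ∈ 𝓑`; by the Sperner property
`B' = C = B`. Both measures are monotone functions of the set of bodies, and the bodies of `Ψ_𝓑`
are exactly the members of `𝓑`.
-/

section Closure

variable {α : Type*} (Φ : Finset (Finset α × α))

theorem subset_hornClosure (Z : Set α) : Z ⊆ hornClosure Φ Z :=
  Set.subset_sInter fun _ hW => hW.1

theorem hornClosed_hornClosure (Z : Set α) : HornClosed Φ (hornClosure Φ Z) :=
  fun c hc hsub _ hW => hW.2 c hc fun _ hx => Set.mem_sInter.mp (hsub hx) _ hW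

variable {Φ}

theorem hornClosure_eq_self_iff {Z : Set α} : hornClosure Φ Z = Z ↔ HornClosed Φ Z := by
  refine ⟨fun h => h ▸ hornClosed_hornClosure Φ Z, fun h => ?_⟩
  have hZ : Z ∈ {W | Z ⊆ W ∧ HornClosed Φ W} := ⟨subset_rfl, h⟩
  exact (Set.sInter_subset_of_mem hZ).antisymm (subset_hornClosure Φ Z)

theorem not_hornClosed_coe_iff {Z : Finset α} :
    ¬ HornClosed Φ ↑Z ↔ ∃ c ∈ Φ, c.1 ⊆ Z ∧ c.2 ∉ Z := by
  simp only [HornClosed, Finset.coe_subset, Finset.mem_coe, not_forall, exists_prop]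

end Closure

section KeyCNF

variable {𝓑 : Finset (Finset V)}

theorem mem_keyCNF {B : Finset V} {v : V} : (B, v) ∈ keyCNF 𝓑 ↔ B ∈ 𝓑 ∧ v ∉ B := by
  simp [keyCNF]

theorem hornClosed_keyCNF_iff {W : Set V} :
    HornClosed (keyCNF 𝓑) W ↔ ((∃ B ∈ 𝓑, ↑B ⊆ W) → W = Set.univ) := by
  constructor
  · rintro hW ⟨B, hB, hBW⟩
    refine Set.eq_univ_of_forall fun v => ?_
    by_cases hv : v ∈ B
    · exact hBW hv
    · exact hW (B, v) (mem_keyCNF.mpr ⟨hB, hv⟩) hBW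
  · rintro hW ⟨B, v⟩ hc hBW
    rw [hW ⟨B, (mem_keyCNF.mp hc).1, hBW⟩]
    trivial

theorem hornClosure_keyCNF_of_mem {B : Finset V} (hB : B ∈ 𝓑) :
    hornClosure (keyCNF 𝓑) ↑B = Set.univ :=
  hornClosed_keyCNF_iff.mp (hornClosed_hornClosure _ _) ⟨B, hB, subset_hornClosure _ _⟩

theorem image_fst_keyCNF (hproper : ∀ B ∈ 𝓑, B ≠ Finset.univ) :
    (keyCNF 𝓑).image Prod.fst = 𝓑 := by
  ext B
  simp only [Finset.mem_image, Prod.exists, mem_keyCNF]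
  refine ⟨fun ⟨_, _, ⟨hB, _⟩, hB'⟩ => hB' ▸ hB, fun hB => ?_⟩
  obtain ⟨v, hv⟩ := Finset.sdiff_nonempty.mpr fun h => hproper B hB (Finset.univ_subset_iff.mp h)
  exact ⟨B, v, ⟨hB, (Finset.mem_sdiff.mp hv).2⟩, rfl⟩

theorem represents_keyCNF (hne : ∀ B ∈ 𝓑, B.Nonempty) : Represents 𝓑 (keyCNF 𝓑) := by
  refine ⟨fun ⟨B, v⟩ hc => ?_, fun _ => rfl⟩
  obtain ⟨hB, hv⟩ := mem_keyCNF.mp hc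
  exact ⟨hne B hB, hv⟩

theorem subset_image_fst_of_represents {Φ : Finset (Finset V × V)} (hΦ : Represents 𝓑 Φ)
    (hproper : ∀ B ∈ 𝓑, B ≠ Finset.univ) (hsperner : ∀ B ∈ 𝓑, ∀ B' ∈ 𝓑, B ⊆ B' → B = B') :
    𝓑 ⊆ Φ.image Prod.fst := by
  intro B hB
  have hB_open : ¬ HornClosed Φ ↑B := by
    rw [← hornClosure_eq_self_iff, hΦ.2, hornClosure_keyCNF_of_mem hB]
    exact fun h => hproper B hB (Finset.coe_eq_univ.mp h.symm)
  obtain ⟨⟨C, v⟩, hc, hCB, hvB⟩ := not_hornClosed_coe_iff.mp hB_open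
  have hv : v ∈ hornClosure (keyCNF 𝓑) ↑C := by
    rw [← hΦ.2]
    exact hornClosed_hornClosure Φ _ _ hc (subset_hornClosure Φ _)
  have hC_open : ¬ HornClosed (keyCNF 𝓑) ↑C := by
    rw [← hornClosure_eq_self_iff]
    exact fun h => hvB (hCB (Finset.mem_coe.mp (h ▸ hv)))
  obtain ⟨B', hB', hB'C⟩ : ∃ B' ∈ 𝓑, B' ⊆ C := by
    by_contra! h
    exact hC_open (hornClosed_keyCNF_iff.mpr fun ⟨B', hB', hB'C⟩ =>
      absurd (Finset.coe_subset.mp hB'C) (h B' hB'))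
  have hB'B : B' = B := hsperner B' hB' B hB (hB'C.trans hCB)
  exact Finset.mem_image.mpr ⟨(C, v), hc, hCB.antisymm (hB'B ▸ hB'C)⟩

theorem OPT_comp_image_fst {f : Finset (Finset V) → ℕ} (hf : Monotone f)
    (hne : ∀ B ∈ 𝓑, B.Nonempty) (hproper : ∀ B ∈ 𝓑, B ≠ Finset.univ)
    (hsperner : ∀ B ∈ 𝓑, ∀ B' ∈ 𝓑, B ⊆ B' → B = B') :
    OPT (fun Φ => f (Φ.image Prod.fst)) 𝓑 = f 𝓑 := by
  have hkey : f ((keyCNF 𝓑).image Prod.fst) = f 𝓑 := by rw [image_fst_keyCNF hproper]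
  refine le_antisymm (Nat.sInf_le ⟨_, represents_keyCNF hne, hkey⟩) ?_
  refine le_csInf ⟨_, _, represents_keyCNF hne, hkey⟩ ?_
  rintro _ ⟨Φ, hΦ, rfl⟩
  exact hf (subset_image_fst_of_represents hΦ hproper hsperner)

end KeyCNF

/-- For a Sperner family `𝓑` of nonempty proper subsets of `V` with
`|𝓑| = m`, `OPT_B(𝓑) = m` and `OPT_BA(𝓑) = Σ_{B ∈ 𝓑} |B|`. -/
theorem stmt1 {V : Type*} [Fintype V] [DecidableEq V]
    (𝓑 : Finset (Finset V)) (m : ℕ) (hm : 𝓑.card = m)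
    (hne : ∀ B ∈ 𝓑, B.Nonempty) (hproper : ∀ B ∈ 𝓑, B ≠ Finset.univ)
    (hsperner : ∀ B ∈ 𝓑, ∀ B' ∈ 𝓑, B ⊆ B' → B = B') :
    OPT sizeB 𝓑 = m ∧ OPT sizeBA 𝓑 = ∑ B ∈ 𝓑, B.card :=
  ⟨hm ▸ OPT_comp_image_fst (fun _ _ => Finset.card_le_card) hne hproper hsperner,
    OPT_comp_image_fst (f := fun 𝓒 => ∑ B ∈ 𝓒, B.card) (fun _ _ => Finset.sum_le_sum_of_subset)
      hne hproper hsperner⟩
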